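/- Let k, ℓ ≥ 2 and n = kℓ. Regard the Segre determinant Seg_{k,ℓ} as a polynomial in the entries b(j,m) of B whose coefficients are polynomials over ℂ in the entries a(i,m) of A; let S be the set of all these coefficient polynomials (one for each monomial in the b-variables). Then for every partition of [n] into ℓ pairwise disjoint k-element subsets I₁, …, I_ℓ, the polynomial ∏_{r=1}^{ℓ} det(A_{I_r}) — where det(A_{I_r}) is the k×k minor polynomial of the generic matrix (a(i,m)) on columns I_r — lies in the ℂ-linear span of S. -/

import Mathlib

open MvPolynomial

/-- The generic Segre determinant `Seg_{k,ℓ}` as a multivariate polynomial over `ℂ` in the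
variables `b (j, m)` (the `Sum.inl` variables) and `a (i, m)` (the `Sum.inr` variables):
it is the determinant of the `n × n` matrix (`n = kℓ`) with rows indexed by
`(i, j) ∈ [k] × [ℓ]` via `(i, j) ↦ iℓ + j`, columns indexed by `m`, and entry
`a (i, m) * b (j, m)`. -/
noncomputable def segrePoly (k ℓ : ℕ) :
    MvPolynomial ((Fin ℓ × Fin (k * ℓ)) ⊕ (Fin k × Fin (k * ℓ))) ℂ :=
  Matrix.det (Matrix.of fun r m : Fin (k * ℓ) =>
    X (Sum.inr ((finProdFinEquiv.symm r).1, m)) * X (Sum.inl ((finProdFinEquiv.symm r).2, m)))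

/-- The Segre determinant viewed as a polynomial in the `b`-variables with coefficients in the
polynomial ring `ℂ[a (i, m)]`. -/
noncomputable def segrePolyInB (k ℓ : ℕ) :
    MvPolynomial (Fin ℓ × Fin (k * ℓ)) (MvPolynomial (Fin k × Fin (k * ℓ)) ℂ) :=
  sumAlgEquiv ℂ (Fin ℓ × Fin (k * ℓ)) (Fin k × Fin (k * ℓ)) (segrePoly k ℓ)

/-- The `k × k` minor of the generic `k × n` matrix of variables `a (i, m)` on the columns in
`I` (a `k`-element subset of `Fin n`), with columns taken in increasing order. -/
noncomputable def genericMinor {k n : ℕ} (I : Finset (Fin n)) (h : I.card = k) :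
    MvPolynomial (Fin k × Fin n) ℂ :=
  Matrix.det (Matrix.of fun i j : Fin k => X (i, (I.orderIsoOfFin h j : Fin n)))

/-!
Specialise the `b`-variables to the incidence matrix of the partition, `b (j, m) = [m ∈ I j]`.
Evaluating a polynomial in the `b`-variables at a point with scalar coordinates gives a
`ℂ`-linear combination of its coefficients. At this point the row `(i, j)` of the Segre matrix
is supported on the columns in `I j`, so listing the columns block by block makes the matrix
block diagonal with blocks `A_{I_j}`, and `Seg` specialises to `± ∏ j, det A_{I_j}`.
-/

namespace MvPolynomial

theorem aeval_mem_span_coeff_of_forall_mem_range {K R σ : Type*} [CommSemiring K]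
    [CommSemiring R] [Algebra K R] (P : MvPolynomial σ R) {g : σ → R}
    (hg : ∀ v, g v ∈ Set.range (algebraMap K R)) :
    aeval g P ∈ Submodule.span K (Set.range fun d : σ →₀ ℕ => coeff d P) := by
  choose c hc using hg
  have hmonomial (d : σ →₀ ℕ) :
      d.prod (fun v n => g v ^ n) = algebraMap K R (d.prod fun v n => c v ^ n) := by
    simp only [Finsupp.prod, map_prod, map_pow, hc]
  rw [show aeval g P = _ from congrArg (aeval g) P.as_sum, map_sum]
  refine Submodule.sum_mem _ fun d _ => ?_
  rw [aeval_monomial, hmonomial, Algebra.algebraMap_self, RingHom.id_apply, mul_comm,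
    ← Algebra.smul_def]
  exact Submodule.smul_mem _ _ (Submodule.subset_span ⟨d, rfl⟩)

theorem aeval_sumAlgEquiv {R σ τ : Type*} [CommSemiring R] (g : σ → MvPolynomial τ R)
    (P : MvPolynomial (σ ⊕ τ) R) :
    aeval g (sumAlgEquiv R σ τ P) = aeval (Sum.elim g X) P := by
  have : ((aeval g).restrictScalars R).comp (sumAlgEquiv R σ τ).toAlgHom =
      aeval (Sum.elim g X) := by
    apply algHom_ext
    rintro (v | v) <;> simp [sumAlgEquiv_X_inl, sumAlgEquiv_X_inr]
  exact DFunLike.congr_fun this P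

end MvPolynomial

namespace Finset

variable {α ι : Type*} [LinearOrder α] {k : ℕ}

theorem orderIsoOfFin_mem_iff_of_pairwise_disjoint {I : ι → Finset α}
    (hcard : ∀ r, (I r).card = k) (hdisj : Pairwise fun r s => Disjoint (I r) (I s))
    {i : Fin k} {r r' : ι} :
    ((I r).orderIsoOfFin (hcard r) i : α) ∈ I r' ↔ r = r' := by
  refine ⟨fun h => ?_, fun h => h ▸ ((I r).orderIsoOfFin (hcard r) i).2⟩
  by_contra hne
  exact disjoint_left.mp (hdisj hne) ((I r).orderIsoOfFin (hcard r) i).2 h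

noncomputable def equivOfPartition (I : ι → Finset α) (hcard : ∀ r, (I r).card = k)
    (hdisj : Pairwise fun r s => Disjoint (I r) (I s)) (hcover : ∀ m, ∃ r, m ∈ I r) :
    Fin k × ι ≃ α :=
  Equiv.ofBijective (fun p => (I p.2).orderIsoOfFin (hcard p.2) p.1) <| by
    constructor
    · rintro ⟨i, r⟩ ⟨i', r'⟩ h
      simp only at h
      obtain rfl : r = r' := (orderIsoOfFin_mem_iff_of_pairwise_disjoint hcard hdisj (i := i)).1
        (h ▸ ((I r').orderIsoOfFin (hcard r') i').2)
      simpa using ((I r).orderIsoOfFin (hcard r)).injective (Subtype.ext h)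
    · intro m
      obtain ⟨r, hm⟩ := hcover m
      exact ⟨(((I r).orderIsoOfFin (hcard r)).symm ⟨m, hm⟩, r), by simp⟩

theorem equivOfPartition_apply (I : ι → Finset α) (hcard : ∀ r, (I r).card = k)
    (hdisj : Pairwise fun r s => Disjoint (I r) (I s)) (hcover : ∀ m, ∃ r, m ∈ I r)
    (i : Fin k) (r : ι) :
    equivOfPartition I hcard hdisj hcover (i, r) = (I r).orderIsoOfFin (hcard r) i :=
  rfl

end Finset

def segreMatrix {κ ι μ R : Type*} [Mul R] (A : Matrix κ μ R) (B : Matrix ι μ R) :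
    Matrix (κ × ι) μ R :=
  Matrix.of fun p m => A p.1 m * B p.2 m

def membershipMatrix {ι α R : Type*} [DecidableEq α] [Zero R] [One R] (I : ι → Finset α) :
    Matrix ι α R :=
  Matrix.of fun r m => if m ∈ I r then 1 else 0

theorem membershipMatrix_apply_mem_range_algebraMap {ι α K R : Type*} [DecidableEq α]
    [CommSemiring K] [Semiring R] [Algebra K R] (I : ι → Finset α) (r : ι) (m : α) :
    membershipMatrix I r m ∈ Set.range (algebraMap K R) := by
  rw [membershipMatrix, Matrix.of_apply]
  split_ifs
  exacts [⟨1, map_one _⟩, ⟨0, map_zero _⟩]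

theorem segreMatrix_membershipMatrix_submatrix_equivOfPartition {α ι R : Type*} [LinearOrder α]
    [DecidableEq ι] [MulZeroOneClass R] {k : ℕ} (I : ι → Finset α)
    (hcard : ∀ r, (I r).card = k) (hdisj : Pairwise fun r s => Disjoint (I r) (I s))
    (hcover : ∀ m, ∃ r, m ∈ I r) (A : Matrix (Fin k) α R) :
    (segreMatrix A (membershipMatrix I)).submatrix id
        (Finset.equivOfPartition I hcard hdisj hcover) =
      Matrix.blockDiagonal fun r =>
        A.submatrix id fun i => ((I r).orderIsoOfFin (hcard r) i : α) := by
  ext ⟨i, r⟩ ⟨i', r'⟩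
  by_cases h : r' = r
  · subst h
    simp [segreMatrix, membershipMatrix, Matrix.blockDiagonal_apply,
      Finset.equivOfPartition_apply]
  · have hnot : Finset.equivOfPartition I hcard hdisj hcover (i', r') ∉ I r :=
      fun hm => h ((Finset.orderIsoOfFin_mem_iff_of_pairwise_disjoint hcard hdisj).1 hm)
    simp [segreMatrix, membershipMatrix, Matrix.blockDiagonal_apply, hnot, Ne.symm h]

theorem segrePoly_eq_det_segreMatrix (k ℓ : ℕ) :
    segrePoly k ℓ = ((segreMatrix (Matrix.of fun i m => X (Sum.inr (i, m)))
      (Matrix.of fun j m => X (Sum.inl (j, m)))).submatrix finProdFinEquiv.symm id).det :=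
  rfl

theorem aeval_segrePolyInB (k ℓ : ℕ)
    (B : Matrix (Fin ℓ) (Fin (k * ℓ)) (MvPolynomial (Fin k × Fin (k * ℓ)) ℂ)) :
    aeval (fun p => B p.1 p.2) (segrePolyInB k ℓ) =
      ((segreMatrix (Matrix.of fun i m => X (i, m)) B).submatrix finProdFinEquiv.symm id).det := by
  rw [segrePolyInB, aeval_sumAlgEquiv, segrePoly_eq_det_segreMatrix, AlgHom.map_det]
  congr 1
  ext r m
  simp [segreMatrix, mul_comm]

theorem prod_minors_mem_span_segre_coeffs_general (k ℓ : ℕ)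
    (I : Fin ℓ → Finset (Fin (k * ℓ))) (hcard : ∀ r, (I r).card = k)
    (hdisj : Pairwise fun r s => Disjoint (I r) (I s))
    (hcover : ∀ m : Fin (k * ℓ), ∃ r, m ∈ I r) :
    (∏ r : Fin ℓ, genericMinor (I r) (hcard r)) ∈
      Submodule.span ℂ (Set.range fun d : (Fin ℓ × Fin (k * ℓ)) →₀ ℕ =>
        MvPolynomial.coeff d (segrePolyInB k ℓ)) := by
  set e := Finset.equivOfPartition I hcard hdisj hcover
  set N := segreMatrix (Matrix.of fun i m => (X (i, m) : MvPolynomial (Fin k × Fin (k * ℓ)) ℂ))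
    (membershipMatrix I)
  have hblock : (N.submatrix id e).det = ∏ r, genericMinor (I r) (hcard r) := by
    rw [segreMatrix_membershipMatrix_submatrix_equivOfPartition, Matrix.det_blockDiagonal]
    rfl
  have hreindex :
      N.submatrix finProdFinEquiv.symm id = (N.submatrix id e).reindex finProdFinEquiv e := by
    ext; simp
  have hspec : aeval (fun p => membershipMatrix I p.1 p.2) (segrePolyInB k ℓ) =
      Equiv.Perm.sign (e.trans finProdFinEquiv.symm) * ∏ r, genericMinor (I r) (hcard r) := by
    rw [aeval_segrePolyInB, hreindex, Matrix.det_reindex, hblock]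
  have hmem := aeval_mem_span_coeff_of_forall_mem_range (K := ℂ) (segrePolyInB k ℓ)
    (g := fun p => membershipMatrix I p.1 p.2)
    fun p => membershipMatrix_apply_mem_range_algebraMap I p.1 p.2
  rw [hspec] at hmem
  rcases Int.units_eq_one_or (Equiv.Perm.sign (e.trans finProdFinEquiv.symm)) with hs | hs <;>
    simpa [hs] using hmem

/-- **Bracket monomials of partitions lie in the span of the Segre coefficients.**
For `k, ℓ ≥ 2` and `n = kℓ`, let `S` be the set of coefficients of `Seg_{k,ℓ}` viewed as a
polynomial in the `b`-variables (one coefficient, a polynomial in the `a`-variables, for each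
monomial in the `b`-variables).  Then for every partition of `[n]` into `ℓ` pairwise disjoint
`k`-element subsets `I₁, …, I_ℓ`, the product of minors `∏ r, det A_{I_r}` lies in the
`ℂ`-linear span of `S`. -/
theorem prod_minors_mem_span_segre_coeffs (k ℓ : ℕ) (hk : 2 ≤ k) (hℓ : 2 ≤ ℓ)
    (I : Fin ℓ → Finset (Fin (k * ℓ))) (hcard : ∀ r, (I r).card = k)
    (hdisj : Pairwise fun r s => Disjoint (I r) (I s))
    (hcover : ∀ m : Fin (k * ℓ), ∃ r, m ∈ I r) :
    (∏ r : Fin ℓ, genericMinor (I r) (hcard r)) ∈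
      Submodule.span ℂ (Set.range fun d : (Fin ℓ × Fin (k * ℓ)) →₀ ℕ =>
        MvPolynomial.coeff d (segrePolyInB k ℓ)) :=
  prod_minors_mem_span_segre_coeffs_general k ℓ I hcard hdisj hcover
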